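/- arXiv:2308.00386 — 3 statements merged into one kernel-verified Lean document; each statement's English description precedes it below -/
import Mathlib

section
/- Let κ be an infinite cardinal and let α be an order automorphism of σℕ^κ (with pointwise order) such that α(2_x) = 2_x for all x ∈ κ. Then α is the identity map. -/
/-!
An element `z` of `σℕ^κ` is determined by the elements `n_x` below it, so it suffices that `α`
fixes every `n_x`. For fixed `x`, the `n_x` are exactly the elements lying above no `2_y` with
`y ≠ x`; as `α` fixes every `2_y`, it maps this chain onto itself, and a chain order-isomorphic
to `ℕ` has no non-trivial automorphism.
-/

open scoped Classical

/-- `σℕ^κ`: functions `κ → ℕ` with all values `≥ 1` and only finitely many values `≠ 1`. -/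
def sigmaN (κ : Type*) : Set (κ → ℕ) :=
  {a | (∀ x, 1 ≤ a x) ∧ {x | a x ≠ 1}.Finite}

/-- The poset `σℕ^κ` (with the pointwise order, inherited from `κ → ℕ`). -/
abbrev SN (κ : Type*) := ↥(sigmaN κ)

/-- The constant function `𝟏`. -/
def oneSN (κ : Type*) : SN κ :=
  ⟨fun _ => 1, fun _ => le_refl 1, by simp⟩

/-- `n_x`: value `n` at `x` and `1` elsewhere (for `n ≥ 1`; `max n 1` guards degenerate `n = 0`). -/
noncomputable def nfS {κ : Type*} (n : ℕ) (x : κ) : SN κ :=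
  ⟨fun t => if t = x then max n 1 else 1, by
    refine ⟨fun t => ?_, Set.Finite.subset (Set.finite_singleton x) fun t ht => ?_⟩
    · by_cases h : t = x <;> simp [h]
    · simp only [Set.mem_setOf_eq] at ht
      by_contra hc
      simp only [Set.mem_singleton_iff] at hc
      exact ht (if_neg hc)⟩

namespace OrderIso

variable {β : Type*} [Preorder β]

lemma image_setOf_forall_not_le (α : β ≃o β) {T : Set β} (hT : ∀ t ∈ T, α t = t) :
    α '' {z | ∀ t ∈ T, ¬ t ≤ z} = {z | ∀ t ∈ T, ¬ t ≤ z} := by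
  ext z
  simp only [α.image_eq_preimage_symm, Set.mem_preimage, Set.mem_ofPred_eq]
  refine forall₂_congr fun t ht => not_congr ?_
  rw [← α.le_iff_le, hT t ht, α.apply_symm_apply]

lemma apply_eq_of_image_range_eq {γ : Type*} [LinearOrder γ] [WellFoundedLT γ] (α : β ≃o β)
    (f : γ ↪o β) (h : α '' Set.range f = Set.range f) (n : γ) : α (f n) = f n := by
  have : f.trans α.toOrderEmbedding = f := by
    rw [← OrderEmbedding.range_inj, RelEmbedding.coe_trans, Set.range_comp]
    exact h
  exact DFunLike.congr_fun this n

end OrderIso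

section

variable {κ : Type*}

lemma SN.le_def {a b : SN κ} : a ≤ b ↔ ∀ x, a.val x ≤ b.val x :=
  Subtype.coe_le_coe.symm.trans Pi.le_def

lemma SN.one_le (z : SN κ) (x : κ) : 1 ≤ z.val x := z.2.1 x

lemma nfS_val (n : ℕ) (x t : κ) : (nfS n x).val t = if t = x then max n 1 else 1 := rfl

lemma nfS_le_iff {n : ℕ} {x : κ} {z : SN κ} : nfS n x ≤ z ↔ max n 1 ≤ z.val x := by
  refine ⟨fun hz => by simpa [nfS_val] using SN.le_def.1 hz x,
    fun hz => SN.le_def.2 fun t => ?_⟩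
  rcases eq_or_ne t x with rfl | hne
  · simpa [nfS_val] using hz
  · simp [nfS_val, hne, SN.one_le]

lemma SN.ext_of_forall_nfS_le_iff {a b : SN κ}
    (h : ∀ n x, nfS (n + 1) x ≤ a ↔ nfS (n + 1) x ≤ b) : a = b := by
  have le_of_imp :
      ∀ {a b : SN κ}, (∀ n x, nfS (n + 1) x ≤ a → nfS (n + 1) x ≤ b) → a ≤ b :=
    fun {a b} h => SN.le_def.2 fun x => by
      have ha := a.one_le x
      have hb := nfS_le_iff.1 (h (a.val x - 1) x (nfS_le_iff.2 (by omega)))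
      omega
  exact le_antisymm (le_of_imp fun n x => (h n x).1) (le_of_imp fun n x => (h n x).2)

noncomputable def axisEmb (x : κ) : ℕ ↪o SN κ :=
  OrderEmbedding.ofMapLEIff (fun n => nfS (n + 1) x) fun m n => by simp [nfS_le_iff, nfS_val]

lemma axisEmb_apply (x : κ) (n : ℕ) : axisEmb x n = nfS (n + 1) x := rfl

lemma range_axisEmb (x : κ) :
    Set.range (axisEmb x) = {z | ∀ t ∈ (nfS 2 ·) '' {x}ᶜ, ¬ t ≤ z} := by
  ext z
  simp only [Set.mem_range, Set.forall_mem_image, Set.mem_compl_singleton_iff, nfS_le_iff,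
    Set.mem_ofPred_eq]
  constructor
  · rintro ⟨n, rfl⟩ y hy
    simp [axisEmb_apply, nfS_val, hy]
  · intro hz
    refine ⟨z.val x - 1, Subtype.ext <| funext fun t => ?_⟩
    have := z.one_le t
    rw [axisEmb_apply, nfS_val]
    rcases eq_or_ne t x with rfl | hne
    · rw [if_pos rfl]
      omega
    · have := hz hne
      rw [if_neg hne]
      omega

end

theorem stmt10_general {κ : Type*} (α : SN κ ≃o SN κ)
    (h : ∀ x : κ, α (nfS 2 x) = nfS 2 x) :
    ∀ z : SN κ, α z = z := by
  have hfix : ∀ n x, α (nfS (n + 1) x) = nfS (n + 1) x := fun n x => by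
    refine α.apply_eq_of_image_range_eq (axisEmb x) ?_ n
    rw [range_axisEmb, α.image_setOf_forall_not_le (Set.forall_mem_image.2 fun y _ => h y)]
  intro z
  refine SN.ext_of_forall_nfS_le_iff fun n x => ?_
  rw [← α.le_iff_le (x := nfS (n + 1) x) (y := z), hfix]

theorem stmt10 {κ : Type*} [Infinite κ] (α : SN κ ≃o SN κ)
    (h : ∀ x : κ, α (nfS 2 x) = nfS 2 x) :
    ∀ z : SN κ, α z = z :=
  stmt10_general α h
end

section
/- For any infinite cardinal κ, the group of order automorphisms of the poset σℕ^κ (pointwise order) is isomorphic to the symmetric group S_κ of all bijections of κ; moreover every order automorphism of σℕ^κ is of the form a ↦ a ∘ g⁻¹ for a unique bijection g of κ. -/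
open scoped Classical

/-!
The elements `n_x` with `n ≥ 2` are recognised order-theoretically: `n_x` is the unique element
`b` whose down-set `Iic b` is a chain of exactly `n` elements. Hence an order automorphism `α`
permutes them, `α (n_x) = n_{g x}` for a permutation `g` of `κ` (read off from `n = 2` and
propagated along `2_x ≤ n_x`). Since `a ∈ σℕ^κ` is determined by the `n_x ≤ a`, namely
`n_x ≤ a ↔ n ≤ a x`, this forces `α a = a ∘ g⁻¹`.
-/

section OrderIso

variable {α β : Type*} [Preorder α] [Preorder β] (e : α ≃o β)

theorem OrderIso.isChain_Iic_apply {b : α} (hb : IsChain (· ≤ ·) (Set.Iic b)) :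
    IsChain (· ≤ ·) (Set.Iic (e b)) := by
  rw [← e.image_Iic]
  exact hb.image e

theorem OrderIso.card_Iic_apply (b : α) : Nat.card (Set.Iic (e b)) = Nat.card (Set.Iic b) := by
  rw [← e.image_Iic, Nat.card_image_of_injective e.injective]

end OrderIso

namespace SN

variable {κ : Type*}

theorem one_le_s11 (a : SN κ) (t : κ) : 1 ≤ (a : κ → ℕ) t := a.2.1 t

theorem nfS_apply_self (n : ℕ) (x : κ) : (nfS n x : κ → ℕ) x = max n 1 := if_pos rfl

theorem nfS_apply_self_of_one_le {n : ℕ} (hn : 1 ≤ n) (x : κ) : (nfS n x : κ → ℕ) x = n := by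
  rw [nfS_apply_self, max_eq_left hn]

theorem nfS_apply_of_ne (n : ℕ) {x t : κ} (h : t ≠ x) : (nfS n x : κ → ℕ) t = 1 := if_neg h

theorem nfS_le_iff {n : ℕ} (hn : 1 ≤ n) {x : κ} {b : SN κ} :
    nfS n x ≤ b ↔ n ≤ (b : κ → ℕ) x := by
  refine ⟨fun h => nfS_apply_self_of_one_le hn x ▸ h x, fun h t => ?_⟩
  by_cases ht : t = x
  · subst ht
    rwa [nfS_apply_self_of_one_le hn]
  · rw [nfS_apply_of_ne n ht]
    exact b.one_le_s11 t

theorem nfS_mono (x : κ) : Monotone (nfS · x : ℕ → SN κ) := fun m n hmn t => by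
  by_cases ht : t = x
  · subst ht
    simp only [nfS_apply_self]
    exact max_le_max_right 1 hmn
  · simp only [nfS_apply_of_ne _ ht, le_refl]

theorem not_nfS_le_nfS {m n : ℕ} {x y : κ} (hm : 2 ≤ m) (hxy : x ≠ y) : ¬ nfS m x ≤ nfS n y :=
  fun h => by
    have hm₁ : m ≤ 1 := by
      have := h x
      rwa [nfS_apply_self_of_one_le (by omega), nfS_apply_of_ne _ hxy] at this
    omega

theorem nfS_injective {n : ℕ} (hn : 2 ≤ n) : Function.Injective (nfS n : κ → SN κ) :=
  fun _ _ h => by_contra fun hxy => not_nfS_le_nfS hn hxy h.le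

theorem eq_nfS_of_forall_ne {b : SN κ} {y : κ} (h : ∀ t ≠ y, (b : κ → ℕ) t = 1) :
    b = nfS ((b : κ → ℕ) y) y := by
  ext t
  by_cases ht : t = y
  · subst ht
    rw [nfS_apply_self_of_one_le (b.one_le_s11 t)]
  · rw [nfS_apply_of_ne _ ht, h t ht]

theorem eq_nfS_of_le_nfS {c : SN κ} {n : ℕ} {x : κ} (h : c ≤ nfS n x) :
    c = nfS ((c : κ → ℕ) x) x :=
  eq_nfS_of_forall_ne fun t ht => le_antisymm (nfS_apply_of_ne n ht ▸ h t) (c.one_le_s11 t)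

theorem Iic_nfS (n : ℕ) (x : κ) :
    Set.Iic (nfS n x : SN κ) = (nfS · x) '' Set.Icc 1 (max n 1) := by
  ext c
  refine ⟨fun hc => (Set.mem_image _ _ _).2
    ⟨(c : κ → ℕ) x, Set.mem_Icc.2 ⟨c.one_le_s11 x, ?_⟩, (eq_nfS_of_le_nfS hc).symm⟩, ?_⟩
  · exact nfS_apply_self n x ▸ hc x
  · rintro ⟨m, ⟨hm, hmn⟩, rfl⟩
    exact (nfS_le_iff hm).2 (nfS_apply_self n x ▸ hmn)

theorem card_Iic_nfS (n : ℕ) (x : κ) : Nat.card (Set.Iic (nfS n x : SN κ)) = max n 1 := by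
  have hinj : Set.InjOn (nfS · x : ℕ → SN κ) (Set.Icc 1 (max n 1)) := fun m hm m' hm' h => by
    simpa only [nfS_apply_self_of_one_le hm.1, nfS_apply_self_of_one_le hm'.1] using
      congrArg (fun b : SN κ => (b : κ → ℕ) x) h
  rw [Iic_nfS, Nat.card_image_of_injOn hinj]
  simp

theorem isChain_Iic_nfS (n : ℕ) (x : κ) : IsChain (· ≤ ·) (Set.Iic (nfS n x : SN κ)) :=
  (nfS_mono x).isChain_range.mono fun _ hc => Set.mem_range.2 ⟨_, (eq_nfS_of_le_nfS hc).symm⟩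

theorem exists_eq_nfS_of_isChain_Iic [Nonempty κ] {b : SN κ}
    (hb : IsChain (· ≤ ·) (Set.Iic b)) : ∃ y, b = nfS ((b : κ → ℕ) y) y := by
  by_cases h : ∃ y, (b : κ → ℕ) y ≠ 1
  · obtain ⟨y, hy⟩ := h
    refine ⟨y, eq_nfS_of_forall_ne fun t hty => by_contra fun ht => ?_⟩
    have hle (s : κ) : nfS ((b : κ → ℕ) s) s ≤ b := (nfS_le_iff (b.one_le_s11 s)).2 le_rfl
    rcases hb.total (hle t) (hle y) with h | h
    · exact not_nfS_le_nfS (by have := b.one_le_s11 t; omega) hty h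
    · exact not_nfS_le_nfS (by have := b.one_le_s11 y; omega) (Ne.symm hty) h
  · push Not at h
    obtain ⟨y⟩ := ‹Nonempty κ›
    exact ⟨y, eq_nfS_of_forall_ne fun t _ => h t⟩

theorem exists_orderIso_apply_nfS (α : SN κ ≃o SN κ) {n : ℕ} (hn : 2 ≤ n) (x : κ) :
    ∃ y, α (nfS n x) = nfS n y := by
  have : Nonempty κ := ⟨x⟩
  set b := α (nfS n x)
  obtain ⟨y, hy⟩ := exists_eq_nfS_of_isChain_Iic (α.isChain_Iic_apply (isChain_Iic_nfS n x))
  have hcard := α.card_Iic_apply (nfS n x)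
  rw [hy, card_Iic_nfS, card_Iic_nfS, max_eq_left (b.one_le_s11 y), max_eq_left (by omega)] at hcard
  exact ⟨y, hcard ▸ hy⟩

noncomputable def pointMap (α : SN κ ≃o SN κ) (x : κ) : κ :=
  (exists_orderIso_apply_nfS α le_rfl x).choose

theorem apply_nfS_two (α : SN κ ≃o SN κ) (x : κ) : α (nfS 2 x) = nfS 2 (pointMap α x) :=
  (exists_orderIso_apply_nfS α le_rfl x).choose_spec

theorem pointMap_symm_pointMap (α : SN κ ≃o SN κ) (x : κ) : pointMap α.symm (pointMap α x) = x :=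
  nfS_injective le_rfl <| by rw [← apply_nfS_two, ← apply_nfS_two, α.symm_apply_apply]

noncomputable def permOfOrderIso (α : SN κ ≃o SN κ) : Equiv.Perm κ where
  toFun := pointMap α
  invFun := pointMap α.symm
  left_inv := pointMap_symm_pointMap α
  right_inv x := by simpa only [OrderIso.symm_symm] using pointMap_symm_pointMap α.symm x

theorem permOfOrderIso_apply (α : SN κ ≃o SN κ) (x : κ) : permOfOrderIso α x = pointMap α x := rfl

theorem apply_nfS (α : SN κ ≃o SN κ) {n : ℕ} (hn : 2 ≤ n) (x : κ) :
    α (nfS n x) = nfS n (permOfOrderIso α x) := by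
  obtain ⟨y, hy⟩ := exists_orderIso_apply_nfS α hn x
  have hle : nfS 2 (permOfOrderIso α x) ≤ nfS n y := by
    rw [← hy, permOfOrderIso_apply, ← apply_nfS_two, α.le_iff_le]
    exact nfS_mono x hn
  rw [hy, by_contra fun hne => not_nfS_le_nfS le_rfl hne hle]

theorem apply_permOfOrderIso (α : SN κ ≃o SN κ) (a : SN κ) (x : κ) :
    (α a : κ → ℕ) (permOfOrderIso α x) = (a : κ → ℕ) x := by
  have hiff (n : ℕ) (hn : 2 ≤ n) : n ≤ (a : κ → ℕ) x ↔ n ≤ (α a : κ → ℕ) (permOfOrderIso α x) := by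
    rw [← nfS_le_iff (by omega), ← nfS_le_iff (by omega), ← apply_nfS α hn, α.le_iff_le]
  have h₁ := hiff _ (Nat.succ_le_succ (a.one_le_s11 x))
  have h₂ := hiff _ (Nat.succ_le_succ ((α a).one_le_s11 (permOfOrderIso α x)))
  omega

theorem comp_perm_mem (a : SN κ) (g : Equiv.Perm κ) : (a : κ → ℕ) ∘ g ∈ sigmaN κ :=
  ⟨fun t => a.one_le_s11 (g t), a.2.2.preimage g.injective.injOn⟩

noncomputable def mapPerm (g : Equiv.Perm κ) : SN κ ≃o SN κ where
  toFun a := ⟨a ∘ g.symm, comp_perm_mem a g.symm⟩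
  invFun a := ⟨a ∘ g, comp_perm_mem a g⟩
  left_inv a := Subtype.ext (funext fun t => by simp)
  right_inv a := Subtype.ext (funext fun t => by simp)
  map_rel_iff' {a b} := ⟨fun h t => by simpa using h (g t), fun h t => h (g.symm t)⟩

theorem coe_mapPerm (g : Equiv.Perm κ) (a : SN κ) : (mapPerm g a : κ → ℕ) = a ∘ g.symm := rfl

theorem mapPerm_trans (g h : Equiv.Perm κ) : mapPerm (g.trans h) = (mapPerm g).trans (mapPerm h) :=
  rfl

theorem mapPerm_nfS (g : Equiv.Perm κ) (n : ℕ) (x : κ) : mapPerm g (nfS n x) = nfS n (g x) := by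
  ext t
  simp [coe_mapPerm, nfS, Equiv.symm_apply_eq]

theorem mapPerm_injective : Function.Injective (mapPerm : Equiv.Perm κ → SN κ ≃o SN κ) := by
  intro g g' h
  ext x
  apply nfS_injective le_rfl
  rw [← mapPerm_nfS g 2 x, ← mapPerm_nfS g' 2 x, h]

theorem mapPerm_permOfOrderIso (α : SN κ ≃o SN κ) : mapPerm (permOfOrderIso α) = α := by
  ext a t
  rw [coe_mapPerm, Function.comp_apply, ← apply_permOfOrderIso α a, Equiv.apply_symm_apply]

theorem forall_coe_apply_eq_comp_iff (α : SN κ ≃o SN κ) (g : Equiv.Perm κ) :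
    (∀ a : SN κ, (α a : κ → ℕ) = a ∘ g.symm) ↔ mapPerm g = α := by
  rw [eq_comm, OrderIso.ext_iff, funext_iff]
  exact forall_congr' fun a => by rw [Subtype.ext_iff, coe_mapPerm]

end SN

theorem stmt11_general {κ : Type*} :
    (∃ Φ : Equiv.Perm κ → (SN κ ≃o SN κ),
      Function.Bijective Φ ∧ ∀ g h : Equiv.Perm κ, Φ (g.trans h) = (Φ g).trans (Φ h)) ∧
    (∀ α : SN κ ≃o SN κ, ∃! g : Equiv.Perm κ,
      ∀ a : SN κ, ((α a : SN κ) : κ → ℕ) = (a : κ → ℕ) ∘ g.symm) := by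
  have hbij : Function.Bijective (SN.mapPerm : Equiv.Perm κ → SN κ ≃o SN κ) :=
    ⟨SN.mapPerm_injective, fun α => ⟨_, SN.mapPerm_permOfOrderIso α⟩⟩
  refine ⟨⟨SN.mapPerm, hbij, SN.mapPerm_trans⟩, fun α => ?_⟩
  simp_rw [SN.forall_coe_apply_eq_comp_iff]
  exact hbij.existsUnique α

/-- The group of order automorphisms of `σℕ^κ` is isomorphic to `S_κ`
(the bijection `Φ` is multiplicative, where `g.trans h` applies `g` first,
matching left-to-right composition of order isomorphisms), and every order
automorphism has the form `a ↦ a ∘ g⁻¹` for a unique bijection `g` of `κ`. -/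
theorem stmt11 {κ : Type*} [Infinite κ] :
    (∃ Φ : Equiv.Perm κ → (SN κ ≃o SN κ),
      Function.Bijective Φ ∧ ∀ g h : Equiv.Perm κ, Φ (g.trans h) = (Φ g).trans (Φ h)) ∧
    (∀ α : SN κ ≃o SN κ, ∃! g : Equiv.Perm κ,
      ∀ a : SN κ, ((α a : SN κ) : κ → ℕ) = (a : κ → ℕ) ∘ g.symm) :=
  stmt11_general
end

section
/- For any infinite cardinal κ, the semigroup IPF(σℕ^κ) is E-unitary: if αε is an idempotent for some idempotent ε ∈ IPF(σℕ^κ), then α is an idempotent. -/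
open scoped Classical

/-- A partial map `α` on `σℕ^κ` belongs to `IPF(σℕ^κ)` iff it is an order isomorphism
from a principal filter `↑a` onto a principal filter `↑b`. Multiplication in
`IPF(σℕ^κ)` is left-to-right composition of partial maps: `α` followed by `β`
is `β.comp α` (`PFun` composition). -/
def IsIPF {κ : Type*} (α : SN κ →. SN κ) : Prop :=
  ∃ a b : SN κ, α.Dom = {z | a ≤ z} ∧ α.ran = {z | b ≤ z} ∧
    ∀ (z w : SN κ) (hz : z ∈ α.Dom) (hw : w ∈ α.Dom),
      z ≤ w ↔ α.fn z hz ≤ α.fn w hw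

/-! Idempotents of `IPF(σℕ^κ)` are identities of principal filters, so if `α ε` is idempotent
then `α : ↑a → ↑b` is the identity on the principal filter `↑c` that it maps onto `↑(e ⊔ b)`.
It remains to see that an order isomorphism `f : ↑a → ↑b` fixing `↑c` pointwise is the
identity. Covers in `σℕ^κ` are the steps `z ↦ z + δₜ`, and `f` preserves covers, so
`f (z + δₜ) = f z + δ_q` for some direction `q`. Comparing the two routes around a square
`z ⋖ z + δₛ, z + δₜ ⋖ z + δₛ + δₜ` shows that `q` does not change as `z` moves up; above `c` it
equals `t`. Hence `f` commutes with every step, and going up from `z` to `z ⊔ c` gives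
`f z = z`. -/

namespace SN

variable {κ : Type*}

instance : SemilatticeSup (SN κ) :=
  Subtype.semilatticeSup fun x y hx hy =>
    ⟨fun i => le_sup_of_le_left (hx.1 i),
      (hx.2.union hy.2).subset fun i hi => by
        by_contra h
        simp only [Set.mem_union, Set.mem_ofPred_eq, not_or, not_not] at h
        simp [h.1, h.2] at hi⟩

theorem ordConnected_range_val : (Set.range (Subtype.val : SN κ → κ → ℕ)).OrdConnected := by
  rw [Subtype.range_coe]
  refine ⟨fun x hx y hy m hm => ⟨fun i => (hx.1 i).trans (hm.1 i), ?_⟩⟩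
  refine hy.2.subset fun i (hi : m i ≠ 1) (hyi : y i = 1) => hi ?_
  have : x i ≤ m i := hm.1 i
  have : m i ≤ y i := hm.2 i
  have := hx.1 i
  omega

noncomputable def bump (z : SN κ) (t : κ) : SN κ :=
  ⟨Function.update z.1 t (z.1 t + 1), fun i => by
      rcases eq_or_ne i t with rfl | h
      · simp
      · simpa [h] using z.2.1 i,
    (z.2.2.union (Set.finite_singleton t)).subset fun i hi => by
      rcases eq_or_ne i t with h | h
      · exact Or.inr h
      · exact Or.inl (by simpa [h] using hi)⟩

theorem bump_apply (z : SN κ) (t i : κ) :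
    (z.bump t).1 i = z.1 i + if i = t then 1 else 0 := by
  rcases eq_or_ne i t with rfl | h <;> simp [bump, *]

theorem covBy_iff_exists_bump {z w : SN κ} : z ⋖ w ↔ ∃ t, w = z.bump t := by
  rw [← ordConnected_range_val.apply_covBy_apply_iff (OrderEmbedding.subtype _)]
  simp only [OrderEmbedding.coe_subtype, Pi.covBy_iff_exists_right_eq, Nat.covBy_iff_add_one_eq,
    exists_eq_left', Subtype.ext_iff]
  rfl

theorem covBy_bump (z : SN κ) (t : κ) : z ⋖ z.bump t := covBy_iff_exists_bump.2 ⟨t, rfl⟩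

theorem bump_left_injective (t : κ) : Function.Injective fun z : SN κ => z.bump t :=
  fun z w h => Subtype.ext <| funext fun i => by
    have := congrArg (fun u : SN κ => u.1 i) h
    simp only [bump_apply] at this
    omega

theorem bump_right_injective (z : SN κ) : Function.Injective z.bump := fun p q h => by
  have := congrArg (fun u : SN κ => u.1 p) h
  simp only [bump_apply] at this
  by_contra hpq
  simp [hpq] at this

theorem bump_bump_comm (z : SN κ) (p q : κ) : (z.bump p).bump q = (z.bump q).bump p :=
  Subtype.ext <| funext fun i => by simp only [bump_apply]; omega

theorem eq_of_bump_bump_eq {z : SN κ} {p p' q q' : κ} (hpq : p ≠ q)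
    (h : (z.bump p).bump p' = (z.bump q).bump q') : p' = q := by
  have := congrArg (fun u : SN κ => u.1 q) h
  by_contra hp'
  simp only [bump_apply, if_neg hpq.symm, if_neg (Ne.symm hp'), if_pos] at this
  omega

theorem bump_le_of_apply_lt {u w : SN κ} {i : κ} (hle : u ≤ w) (hi : u.1 i < w.1 i) :
    u.bump i ≤ w := fun j => by
    have : u.1 j ≤ w.1 j := hle j
    show (u.bump i).1 j ≤ w.1 j
    rw [bump_apply]
    split_ifs with h
    · subst h; omega
    · simpa using this

theorem le_induction {P : SN κ → Prop} {z w : SN κ} (hzw : z ≤ w) (hz : P z)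
    (hbump : ∀ u t, z ≤ u → P u → P (u.bump t)) : P w := by
  let d : SN κ → ℕ := fun u => ∑ i ∈ w.2.2.toFinset, (w.1 i - u.1 i)
  suffices ∀ n u, d u = n → z ≤ u → u ≤ w → P u → P w from this _ z rfl le_rfl hzw hz
  intro n
  induction n using Nat.strong_induction_on with
  | _ n ih =>
    rintro u rfl hzu huw hu
    obtain rfl | hlt := huw.eq_or_lt
    · exact hu
    obtain ⟨i, hi⟩ : ∃ i, u.1 i < w.1 i := Pi.lt_def.1 hlt |>.2
    refine ih _ ?_ _ rfl (hzu.trans (covBy_bump u i).le) (bump_le_of_apply_lt huw hi)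
      (hbump u i hzu hu)
    refine Finset.sum_lt_sum (fun j _ => Nat.sub_le_sub_left ((covBy_bump u i).le j) _) ⟨i, ?_, ?_⟩
    · have := u.2.1 i
      simp only [Set.Finite.mem_toFinset, Set.mem_ofPred_eq]
      omega
    · rw [bump_apply, if_pos rfl]
      omega

end SN

structure IsIciOrderIso {P Q : Type*} [Preorder P] [Preorder Q] (f : P → Q) (a : P) (b : Q) :
    Prop where
  mapsTo : Set.MapsTo f (Set.Ici a) (Set.Ici b)
  surjOn : Set.SurjOn f (Set.Ici a) (Set.Ici b)
  le_iff_le : ∀ ⦃x⦄, a ≤ x → ∀ ⦃y⦄, a ≤ y → (f x ≤ f y ↔ x ≤ y)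

namespace IsIciOrderIso

theorem injOn {P Q : Type*} [PartialOrder P] [Preorder Q] {f : P → Q} {a : P} {b : Q}
    (hf : IsIciOrderIso f a b) : Set.InjOn f (Set.Ici a) := fun _ hx _ hy h =>
  le_antisymm ((hf.le_iff_le hx hy).1 h.le) ((hf.le_iff_le hy hx).1 h.ge)

section Order

variable {P Q : Type*} [Preorder P] [Preorder Q] {f : P → Q} {a : P} {b : Q} {x y : P}

theorem lt_iff_lt (hf : IsIciOrderIso f a b) (hx : a ≤ x) (hy : a ≤ y) : f x < f y ↔ x < y := by
  simp only [lt_iff_le_not_ge, hf.le_iff_le hx hy, hf.le_iff_le hy hx]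

theorem covBy_iff (hf : IsIciOrderIso f a b) (hx : a ≤ x) (hy : a ≤ y) : f x ⋖ f y ↔ x ⋖ y := by
  refine ⟨fun h => ⟨(hf.lt_iff_lt hx hy).1 h.lt, fun m hxm hmy => ?_⟩,
    fun h => ⟨(hf.lt_iff_lt hx hy).2 h.lt, fun m hxm hmy => ?_⟩⟩
  · have hm : a ≤ m := hx.trans hxm.le
    exact h.2 ((hf.lt_iff_lt hx hm).2 hxm) ((hf.lt_iff_lt hm hy).2 hmy)
  · obtain ⟨m, hm, rfl⟩ := hf.surjOn ((hf.mapsTo hx : b ≤ f x).trans hxm.le)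
    exact h.2 ((hf.lt_iff_lt hx hm).1 hxm) ((hf.lt_iff_lt hm hy).1 hmy)

end Order

section SN

variable {κ : Type*} {f : SN κ → SN κ} {a b c z : SN κ}

theorem exists_apply_bump (hf : IsIciOrderIso f a b) (hz : a ≤ z) (t : κ) :
    ∃ q, f (z.bump t) = (f z).bump q :=
  SN.covBy_iff_exists_bump.1 <|
    (hf.covBy_iff hz (hz.trans (SN.covBy_bump z t).le)).2 (SN.covBy_bump z t)

theorem apply_bump_bump_of_ne (hf : IsIciOrderIso f a b) (hz : a ≤ z) {s t q : κ} (hst : s ≠ t)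
    (hq : f (z.bump t) = (f z).bump q) : f ((z.bump s).bump t) = (f (z.bump s)).bump q := by
  have hzs : a ≤ z.bump s := hz.trans (SN.covBy_bump z s).le
  have hzt : a ≤ z.bump t := hz.trans (SN.covBy_bump z t).le
  obtain ⟨p, hp⟩ := hf.exists_apply_bump hz s
  obtain ⟨q', hq'⟩ := hf.exists_apply_bump hzs t
  obtain ⟨p', hp'⟩ := hf.exists_apply_bump hzt s
  have hpq : p ≠ q := fun h => hst <| SN.bump_right_injective z <|
    hf.injOn hzs hzt (by rw [hp, hq, h])
  have hsquare : ((f z).bump p).bump q' = ((f z).bump q).bump p' := by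
    rw [← hp, ← hq, ← hq', ← hp', SN.bump_bump_comm]
  rw [hq', SN.eq_of_bump_bump_eq hpq hsquare]

theorem apply_bump_bump (hf : IsIciOrderIso f a b) (hz : a ≤ z) (s : κ) {t q : κ}
    (hq : f (z.bump t) = (f z).bump q) : f ((z.bump s).bump t) = (f (z.bump s)).bump q := by
  rcases ne_or_eq s t with hst | rfl
  · exact hf.apply_bump_bump_of_ne hz hst hq
  have hzs : a ≤ z.bump s := hz.trans (SN.covBy_bump z s).le
  obtain ⟨q', hq'⟩ := hf.exists_apply_bump hzs s
  rw [hq']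
  obtain rfl | hne := eq_or_ne q' q
  · rfl
  -- by surjectivity the cover `(f z).bump q'` of `f z` is the image of a cover `z.bump s'` of `z`
  obtain ⟨_, hu, hfu⟩ := hf.surjOn ((hf.mapsTo hz : b ≤ f z).trans (SN.covBy_bump (f z) q').le)
  obtain ⟨s', rfl⟩ := SN.covBy_iff_exists_bump.1 <|
    (hf.covBy_iff hz hu).1 (hfu ▸ SN.covBy_bump (f z) q')
  have hs' : s' ≠ s := by
    rintro rfl
    exact hne (SN.bump_right_injective _ (hq ▸ hfu.symm))
  have hbump_eq : (z.bump s).bump s' = (z.bump s).bump s :=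
    hf.injOn (hzs.trans (SN.covBy_bump _ s').le) (hzs.trans (SN.covBy_bump _ s).le)
      (by rw [hf.apply_bump_bump_of_ne hz hs'.symm hfu, hq'])
  exact absurd (SN.bump_right_injective _ hbump_eq) hs'

theorem apply_bump_of_le (hf : IsIciOrderIso f a b) (hz : a ≤ z) {w : SN κ} (hzw : z ≤ w)
    {t q : κ} (hq : f (z.bump t) = (f z).bump q) : f (w.bump t) = (f w).bump q :=
  SN.le_induction (P := fun u => f (u.bump t) = (f u).bump q) hzw hq
    fun _ s hzu hu => hf.apply_bump_bump (hz.trans hzu) s hu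

theorem apply_bump (hf : IsIciOrderIso f a b) (hfix : ∀ w, c ≤ w → f w = w) (hz : a ≤ z)
    (t : κ) : f (z.bump t) = (f z).bump t := by
  obtain ⟨q, hq⟩ := hf.exists_apply_bump hz t
  have hw := hf.apply_bump_of_le hz (le_sup_left : z ≤ z ⊔ c) hq
  rw [hfix _ le_sup_right, hfix _ (le_sup_right.trans (SN.covBy_bump _ t).le)] at hw
  rwa [← SN.bump_right_injective _ hw] at hq

theorem apply_eq_self (hf : IsIciOrderIso f a b) (hfix : ∀ w, c ≤ w → f w = w) (hz : a ≤ z) :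
    f z = z :=
  SN.le_induction (P := fun u => f u = u → f z = z) (le_sup_left : z ≤ z ⊔ c) id
    (fun u t hzu hu hfu => hu <| SN.bump_left_injective t <| by
      simpa only [hf.apply_bump hfix (hz.trans hzu) t] using hfu)
    (hfix _ le_sup_right)

end SN

end IsIciOrderIso

namespace PFun

variable {α β γ : Type*}

theorem mem_comp_iff {f : α →. β} {g : β →. γ} {x : α} {z : γ} :
    z ∈ g.comp f x ↔ ∃ y ∈ f x, z ∈ g y := by
  rw [comp_apply]
  exact Part.mem_bind_iff

protected def Injective (f : α →. β) : Prop :=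
  ∀ ⦃x₁ x₂ y⦄, y ∈ f x₁ → y ∈ f x₂ → x₁ = x₂

theorem Injective.comp {f : α →. β} {g : β →. γ} (hg : g.Injective) (hf : f.Injective) :
    (g.comp f).Injective := by
  intro x₁ x₂ z h₁ h₂
  obtain ⟨y₁, hy₁, hz₁⟩ := mem_comp_iff.1 h₁
  obtain ⟨y₂, hy₂, hz₂⟩ := mem_comp_iff.1 h₂
  exact hf hy₁ (hg hz₁ hz₂ ▸ hy₂)

theorem eq_of_mem_of_comp_self_eq {f : α →. α} (hf : f.Injective) (hidem : f.comp f = f)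
    {x y : α} (h : y ∈ f x) : y = x := by
  obtain ⟨m, hm, hy⟩ := mem_comp_iff.1 (by rwa [hidem] : y ∈ f.comp f x)
  rw [Part.mem_unique hm h] at hy
  exact hf hy h

theorem mem_self_of_comp_self_eq {f : α →. α} (hf : f.Injective) (hidem : f.comp f = f)
    {x : α} (hx : x ∈ f.Dom) : x ∈ f x := by
  obtain ⟨y, hy⟩ := (mem_dom f x).1 hx
  obtain rfl := eq_of_mem_of_comp_self_eq hf hidem hy
  exact hy

theorem comp_self_eq_self {f : α →. α} (h : ∀ x y, y ∈ f x → y = x) : f.comp f = f := by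
  refine ext fun x y => ⟨fun hy => ?_, fun hy => mem_comp_iff.2 ⟨x, h x y hy ▸ hy, hy⟩⟩
  obtain ⟨m, hm, hy⟩ := mem_comp_iff.1 hy
  rwa [h x m hm] at hy

theorem mem_iff_getOrElse (f : α →. α) {x y : α} :
    y ∈ f x ↔ x ∈ f.Dom ∧ (f x).getOrElse x = y := by
  constructor
  · rintro ⟨hx, rfl⟩
    exact ⟨hx, Part.getOrElse_of_dom _ hx _⟩
  · rintro ⟨hx, rfl⟩
    rw [Part.getOrElse_of_dom _ hx]
    exact Part.get_mem hx

end PFun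

namespace IsIPF

variable {κ : Type*} {α : SN κ →. SN κ}

theorem injective (hα : IsIPF α) : α.Injective := by
  obtain ⟨-, -, -, -, hle⟩ := hα
  intro x₁ x₂ y h₁ h₂
  have hd₁ : x₁ ∈ α.Dom := (α.mem_dom x₁).2 ⟨y, h₁⟩
  have hd₂ : x₂ ∈ α.Dom := (α.mem_dom x₂).2 ⟨y, h₂⟩
  have hfn : α.fn x₁ hd₁ = α.fn x₂ hd₂ :=
    (Part.get_eq_of_mem h₁ hd₁).trans (Part.get_eq_of_mem h₂ hd₂).symm
  exact le_antisymm ((hle _ _ hd₁ hd₂).2 hfn.le) ((hle _ _ hd₂ hd₁).2 hfn.ge)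

theorem exists_isIciOrderIso (hα : IsIPF α) :
    ∃ a b, α.Dom = Set.Ici a ∧ IsIciOrderIso (fun z => (α z).getOrElse z) a b := by
  obtain ⟨a, b, hdom, hran, hle⟩ := hα
  replace hdom : α.Dom = Set.Ici a := hdom
  have hfn : ∀ z (hz : z ∈ α.Dom), (α z).getOrElse z = α.fn z hz :=
    fun z hz => Part.getOrElse_of_dom _ hz _
  refine ⟨a, b, hdom, fun z hz => ?_, fun w hw => ?_, fun x hx y hy => ?_⟩
  · show _ ∈ {w | b ≤ w}
    rw [← hran]
    exact ⟨z, α.mem_iff_getOrElse.2 ⟨hdom ▸ hz, rfl⟩⟩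
  · obtain ⟨x, hx⟩ : w ∈ α.ran := hran ▸ hw
    obtain ⟨hxd, hfx⟩ := α.mem_iff_getOrElse.1 hx
    exact ⟨x, hdom ▸ hxd, hfx⟩
  · rw [hfn x (hdom ▸ hx), hfn y (hdom ▸ hy)]
    exact (hle x y _ _).symm

end IsIPF

theorem stmt18_general {κ : Type*} (α ε : SN κ →. SN κ)
    (hα : IsIPF α) (hε : IsIPF ε) (hidem : ε.comp ε = ε)
    (h : (ε.comp α).comp (ε.comp α) = ε.comp α) :
    α.comp α = α := by
  obtain ⟨a, b, hdom, hf⟩ := hα.exists_isIciOrderIso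
  set f : SN κ → SN κ := fun z => (α z).getOrElse z
  have hmem : ∀ z y, y ∈ α z ↔ a ≤ z ∧ f z = y := fun z y => by
    rw [α.mem_iff_getOrElse, hdom]; rfl
  have hεinj := hε.injective
  have hγinj := hεinj.comp hα.injective
  obtain ⟨e, -, hεdom, -⟩ := hε
  obtain ⟨c, hac, hc⟩ := hf.surjOn (le_sup_right : b ≤ e ⊔ b)
  have hfix : ∀ z, c ≤ z → f z = z := fun z hcz => by
    have haz : a ≤ z := le_trans hac hcz
    have hez : e ≤ f z := le_sup_left.trans (hc ▸ (hf.le_iff_le hac haz).2 hcz)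
    refine PFun.eq_of_mem_of_comp_self_eq hγinj h (PFun.mem_comp_iff.2 ⟨f z, ?_, ?_⟩)
    · exact (hmem z _).2 ⟨haz, rfl⟩
    · exact PFun.mem_self_of_comp_self_eq hεinj hidem (hεdom ▸ hez)
  refine PFun.comp_self_eq_self fun z y hy => ?_
  obtain ⟨hz, rfl⟩ := (hmem z y).1 hy
  exact hf.apply_eq_self hfix hz

/-- `IPF(σℕ^κ)` is E-unitary: if `α ε` is idempotent for some idempotent `ε`
(products left-to-right, so `α ε` is `ε.comp α`), then `α` is idempotent. -/
theorem stmt18 {κ : Type*} [Infinite κ] (α ε : SN κ →. SN κ)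
    (hα : IsIPF α) (hε : IsIPF ε) (hidem : ε.comp ε = ε)
    (h : (ε.comp α).comp (ε.comp α) = ε.comp α) :
    α.comp α = α :=
  stmt18_general α ε hα hε hidem h
end
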